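/- arXiv:2010.07890 — 4 statements merged into one kernel-verified Lean document; each statement's English description precedes it below -/
import Mathlib

section
/- Let g and h be normalized arithmetic functions with h non-vanishing, and let 1 ≤ m < n be integers. Then A_{n,m}^{g,h} = Σ_{μ ⊢ n−m} 𝓖(μ) · 𝓗(μ, n), where the sum runs over all partitions μ of n − m. -/
open Finset Polynomial

/-- The recursively defined polynomials `P_n^{g,h}` attached to arithmetic functions
`g, h : ℕ → ℝ` (values at `0` are irrelevant): `P_0 = 1` and
`P_n(x) = (x / h(n)) · Σ_{k=1}^n g(k) · P_{n-k}(x)`. -/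
noncomputable def Ppoly (g h : ℕ → ℝ) : ℕ → Polynomial ℝ
  | 0 => 1
  | (n+1) => Polynomial.C (h (n+1))⁻¹ * Polynomial.X *
      ∑ k ∈ Finset.range (n+1), Polynomial.C (g (k+1)) * Ppoly g h (n - k)
  termination_by n => n
  decreasing_by all_goals (simp_wf; try omega)

/-- `A_{n,m}^{g,h}`: the coefficient of `x^m` in `(∏_{k=1}^n h(k)) · P_n^{g,h}(x)`. -/
noncomputable def Acoeff (g h : ℕ → ℝ) (n m : ℕ) : ℝ :=
  (∏ k ∈ Finset.Icc 1 n, h k) * (Ppoly g h n).coeff m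

/-- `h` extended by the convention `h(0) := 0`. -/
noncomputable def hExt (h : ℕ → ℝ) (n : ℕ) : ℝ := if n = 0 then 0 else h n

/-- `h_m(n) = ∏_{k=0}^{m-1} h(n-k)` (with the convention `h(0) := 0`). -/
noncomputable def hIter (h : ℕ → ℝ) (m n : ℕ) : ℝ :=
  ∏ k ∈ Finset.range m, hExt h (n - k)

/-- Helper for `H(μ,n)`: defined on reversed compositions, peeling off the head
(which is the last part `μ_{r+1}` of the original composition). -/
noncomputable def Hrev (h : ℕ → ℝ) : List ℕ → ℕ → ℝ
  | [], _ => 1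
  | (a :: t), n =>
      if n < (a :: t).sum + (a :: t).length then 0
      else ∑ k ∈ Finset.Ico ((a :: t).sum + (a :: t).length - 1) n,
        hIter h a k * Hrev h t (k - a)

/-- `H(μ, n)` for a composition `μ` (a list of positive integers): `H(ε,n) = 1`,
`H(μ,n) = Σ_{k=|μ|+ℓ(μ)-1}^{n-1} h_{μ_{r+1}}(k) · H((μ_1,…,μ_r), k - μ_{r+1})`
if `n ≥ |μ| + ℓ(μ)`, and `0` otherwise. -/
noncomputable def HFun (h : ℕ → ℝ) (μ : List ℕ) (n : ℕ) : ℝ := Hrev h μ.reverse n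

/-- `𝓗(μ, n) = Σ_{λ ∈ Orb(μ)} H(λ, n)`: sum over all distinct rearrangements of `μ`. -/
noncomputable def HCal (h : ℕ → ℝ) (μ : List ℕ) (n : ℕ) : ℝ :=
  ∑ lam ∈ μ.permutations.toFinset, HFun h lam n

/-- `𝓖(μ) = ∏_{k=1}^{ℓ(μ)} g(μ_k + 1)`. -/
noncomputable def GCal (g : ℕ → ℝ) (μ : List ℕ) : ℝ := (μ.map (fun p => g (p + 1))).prod

/-!
Both sides satisfy the same recursion in `n`. Clearing denominators in the recursion for `P_n`
gives `A_{n+1,m+1} = Σ_k g(k+1) h_k(n) A_{n-k,m}`, where `A_{n-k,m} = 0` once `n - k < m`.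
Summing `𝓖(μ) 𝓗(μ, n)` over the partitions `μ` of `N` is summing `𝓖(λ) H(λ, n)` over
the compositions `λ` of `N`. Reversing them, `H` peels off the first part `a`, and
`H(a :: t, n + 1) = H(a :: t, n) + h_a(n) H(t, n - a)`; splitting compositions by their first
part then gives the same recursion, the term `k = 0` coming from `g(1) = 1`.
-/

section Coefficients

variable (g h : ℕ → ℝ)

lemma Ppoly_succ_coeff_succ (n m : ℕ) :
    (Ppoly g h (n + 1)).coeff (m + 1) =
      (h (n + 1))⁻¹ * ∑ k ∈ range (n + 1), g (k + 1) * (Ppoly g h (n - k)).coeff m := by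
  rw [Ppoly, mul_assoc, Polynomial.coeff_C_mul, Polynomial.coeff_X_mul,
    Polynomial.finsetSum_coeff]
  simp only [Polynomial.coeff_C_mul]

lemma Ppoly_succ_coeff_zero (n : ℕ) : (Ppoly g h (n + 1)).coeff 0 = 0 := by
  rw [Ppoly, mul_assoc, Polynomial.coeff_C_mul, Polynomial.mul_coeff_zero,
    Polynomial.coeff_X_zero, zero_mul, mul_zero]

lemma Ppoly_coeff_eq_zero_of_lt {n m : ℕ} (hnm : n < m) : (Ppoly g h n).coeff m = 0 := by
  induction n using Nat.strong_induction_on generalizing m with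
  | _ n ih =>
    obtain _ | n := n
    · rw [Ppoly, Polynomial.coeff_one, if_neg hnm.ne']
    · obtain _ | m := m
      · omega
      rw [Ppoly_succ_coeff_succ, sum_eq_zero, mul_zero]
      intro k _
      rw [ih (n - k) (by omega) (by omega), mul_zero]

lemma Acoeff_eq_zero_of_lt {n m : ℕ} (hnm : n < m) : Acoeff g h n m = 0 := by
  rw [Acoeff, Ppoly_coeff_eq_zero_of_lt g h hnm, mul_zero]

@[simp]
lemma hIter_zero_left (n : ℕ) : hIter h 0 n = 1 := by
  simp [hIter]

lemma hIter_eq_zero_of_lt {a n : ℕ} (hn : n < a) : hIter h a n = 0 :=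
  prod_eq_zero (mem_range.mpr hn) (by simp [hExt])

lemma prod_Icc_eq_mul_hIter {k n : ℕ} (hk : k ≤ n) :
    ∏ j ∈ Icc 1 n, h j = (∏ j ∈ Icc 1 (n - k), h j) * hIter h k n := by
  induction k with
  | zero => simp
  | succ k ih =>
    have hsplit : n - k = n - (k + 1) + 1 := by omega
    rw [ih (by omega), hIter, hIter, prod_range_succ, hsplit, prod_Icc_succ_top (by omega),
      hExt, if_neg (by omega), ← hsplit]
    ring

lemma Acoeff_succ_succ (hnv : ∀ k, 1 ≤ k → h k ≠ 0) (n m : ℕ) :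
    Acoeff g h (n + 1) (m + 1) =
      ∑ k ∈ range (n + 1), g (k + 1) * hIter h k n * Acoeff g h (n - k) m := by
  have hcancel : h (n + 1) * (h (n + 1))⁻¹ = 1 := mul_inv_cancel₀ (hnv (n + 1) (by omega))
  calc Acoeff g h (n + 1) (m + 1)
      = (h (n + 1) * (h (n + 1))⁻¹) * ∑ k ∈ range (n + 1),
          g (k + 1) * ((∏ j ∈ Icc 1 n, h j) * (Ppoly g h (n - k)).coeff m) := by
        rw [Acoeff, Ppoly_succ_coeff_succ, prod_Icc_succ_top (by omega), mul_sum, mul_sum,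
          mul_sum]
        refine sum_congr rfl fun k _ => ?_
        ring
    _ = _ := by
        rw [hcancel, one_mul]
        refine sum_congr rfl fun k hk => ?_
        rw [Acoeff, prod_Icc_eq_mul_hIter h (Nat.lt_succ_iff.mp (mem_range.mp hk))]
        ring

end Coefficients

section Compositions

def compositions (N : ℕ) : Finset (List ℕ) :=
  (univ : Finset (Composition N)).image Composition.blocks

lemma mem_compositions {N : ℕ} {l : List ℕ} :
    l ∈ compositions N ↔ l.sum = N ∧ ∀ x ∈ l, 0 < x := by
  simp only [compositions, mem_image, mem_univ, true_and]
  constructor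
  · rintro ⟨c, rfl⟩
    exact ⟨c.blocks_sum, fun _ => c.blocks_pos⟩
  · rintro ⟨hsum, hpos⟩
    exact ⟨⟨l, hpos _, hsum⟩, rfl⟩

lemma compositions_zero : compositions 0 = {[]} := by
  ext l
  rw [mem_compositions, mem_singleton]
  constructor
  · rintro ⟨hsum, hpos⟩
    exact List.eq_nil_iff_forall_not_mem.mpr fun x hx =>
      (hpos x hx).ne' (List.sum_eq_zero_iff.mp hsum x hx)
  · rintro rfl
    simp

lemma compositions_succ (M : ℕ) :
    compositions (M + 1) =
      (range (M + 1)).biUnion fun b => (compositions (M - b)).image (List.cons (b + 1)) := by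
  ext l
  simp only [mem_biUnion, mem_range, mem_image, mem_compositions]
  constructor
  · rintro ⟨hsum, hpos⟩
    obtain _ | ⟨a, t⟩ := l
    · simp at hsum
    have ha := hpos a List.mem_cons_self
    rw [List.sum_cons] at hsum
    exact ⟨a - 1, by omega, t, ⟨by omega, fun x hx => hpos x (List.mem_cons_of_mem a hx)⟩,
      by rw [Nat.sub_add_cancel ha]⟩
  · rintro ⟨b, hb, t, ⟨hsum, hpos⟩, rfl⟩
    refine ⟨by rw [List.sum_cons, hsum]; omega, fun x hx => ?_⟩
    rcases List.mem_cons.mp hx with rfl | hx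
    exacts [b.succ_pos, hpos x hx]

lemma sum_compositions_succ {M : Type*} [AddCommMonoid M] (N : ℕ) (f : List ℕ → M) :
    ∑ l ∈ compositions (N + 1), f l =
      ∑ b ∈ range (N + 1), ∑ t ∈ compositions (N - b), f ((b + 1) :: t) := by
  rw [compositions_succ, sum_biUnion]
  · exact sum_congr rfl fun b _ => sum_image fun _ _ _ _ hcons => List.cons_injective hcons
  · intro b _ c _ hbc
    simp only [Function.onFun, disjoint_left, mem_image]
    rintro l ⟨t, _, rfl⟩ ⟨t', _, hcons⟩
    exact hbc (by simpa using (List.cons.inj hcons).1.symm)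

lemma sum_compositions_reverse {M : Type*} [AddCommMonoid M] (N : ℕ) (f : List ℕ → M) :
    ∑ l ∈ compositions N, f l.reverse = ∑ l ∈ compositions N, f l := by
  have hrev : ∀ l ∈ compositions N, l.reverse ∈ compositions N := fun l hl => by
    obtain ⟨hsum, hpos⟩ := mem_compositions.mp hl
    exact mem_compositions.mpr ⟨by rw [List.sum_reverse, hsum],
      fun x hx => hpos x (List.mem_reverse.mp hx)⟩
  exact sum_nbij' List.reverse List.reverse hrev hrev (fun l _ => l.reverse_reverse)
    (fun l _ => l.reverse_reverse) fun _ _ => rfl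

end Compositions

section HSums

variable (h : ℕ → ℝ)

lemma Hrev_eq_zero_of_lt {l : List ℕ} {n : ℕ} (hn : n < l.sum + l.length) : Hrev h l n = 0 := by
  obtain _ | ⟨a, t⟩ := l
  · simp at hn
  · rw [Hrev, if_pos hn]

/-- Without the cutoffs of the definition: the terms they remove vanish anyway. -/
lemma Hrev_cons (a : ℕ) (t : List ℕ) (n : ℕ) :
    Hrev h (a :: t) n = ∑ k ∈ range n, hIter h a k * Hrev h t (k - a) := by
  set T := (a :: t).sum + (a :: t).length with hT
  have hvanish : ∀ k, k + 1 < T → hIter h a k * Hrev h t (k - a) = 0 := fun k hk => by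
    by_cases hka : k < a
    · rw [hIter_eq_zero_of_lt h hka, zero_mul]
    · rw [Hrev_eq_zero_of_lt h (by simp [hT] at hk; omega), mul_zero]
  rw [Hrev]
  split_ifs with hn
  · exact (sum_eq_zero fun k hk => hvanish k (by simp at hk; omega)).symm
  · rw [← sum_range_add_sum_Ico _ (by omega : T - 1 ≤ n),
      sum_eq_zero (s := range (T - 1)) fun k hk => hvanish k (by simp at hk; omega), zero_add]

lemma Hrev_cons_succ (a : ℕ) (t : List ℕ) (n : ℕ) :
    Hrev h (a :: t) (n + 1) = Hrev h (a :: t) n + hIter h a n * Hrev h t (n - a) := by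
  rw [Hrev_cons, Hrev_cons, sum_range_succ]

end HSums

lemma GCal_cons (g : ℕ → ℝ) (a : ℕ) (t : List ℕ) :
    GCal g (a :: t) = g (a + 1) * GCal g t := by
  rw [GCal, GCal, List.map_cons, List.prod_cons]

lemma List.Perm.GCal_eq (g : ℕ → ℝ) {l₁ l₂ : List ℕ} (hp : l₁.Perm l₂) :
    GCal g l₁ = GCal g l₂ :=
  (hp.map _).prod_eq

section CompositionSum

variable (g h : ℕ → ℝ)

noncomputable def compositionSum (N n : ℕ) : ℝ :=
  ∑ l ∈ compositions N, GCal g l * Hrev h l n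

lemma compositionSum_zero_left (n : ℕ) : compositionSum g h 0 n = 1 := by
  simp [compositionSum, compositions_zero, GCal, Hrev]

lemma compositionSum_eq_zero_of_le {N n : ℕ} (hN : 0 < N) (hn : n ≤ N) :
    compositionSum g h N n = 0 := by
  refine sum_eq_zero fun l hl => ?_
  obtain ⟨hsum, -⟩ := mem_compositions.mp hl
  have hlen : 0 < l.length := List.length_pos_iff.mpr (by rintro rfl; simp at hsum; omega)
  rw [Hrev_eq_zero_of_lt h (by omega), mul_zero]

lemma compositionSum_succ_right (N n : ℕ) :
    compositionSum g h N (n + 1) = compositionSum g h N n +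
      ∑ b ∈ range N,
        g (b + 2) * hIter h (b + 1) n * compositionSum g h (N - (b + 1)) (n - (b + 1)) := by
  obtain _ | M := N
  · simp [compositionSum_zero_left]
  simp only [compositionSum, sum_compositions_succ, Nat.add_sub_add_right, mul_sum,
    ← sum_add_distrib, Hrev_cons_succ, GCal_cons]
  refine sum_congr rfl fun b _ => sum_congr rfl fun t _ => ?_
  ring

end CompositionSum

lemma Acoeff_eq_compositionSum (g h : ℕ → ℝ) (hg : g 1 = 1)
    (hnv : ∀ k, 1 ≤ k → h k ≠ 0) {n m : ℕ} (hmn : m ≤ n) :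
    Acoeff g h n m = compositionSum g h (n - m) n := by
  induction n using Nat.strong_induction_on generalizing m with
  | _ n ih =>
    obtain _ | n := n
    · obtain rfl : m = 0 := by omega
      simp [Acoeff, Ppoly, compositionSum_zero_left]
    obtain _ | m := m
    · rw [Acoeff, Ppoly_succ_coeff_zero, mul_zero, Nat.sub_zero,
        compositionSum_eq_zero_of_le g h n.succ_pos le_rfl]
    have hterms : ∀ k ∈ range (n + 1), k ∉ range (n - m + 1) →
        g (k + 1) * hIter h k n * Acoeff g h (n - k) m = 0 := fun k hk' hk => by
      rw [Acoeff_eq_zero_of_lt g h (show n - k < m by simp at hk hk'; omega), mul_zero]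
    calc Acoeff g h (n + 1) (m + 1)
        = ∑ k ∈ range (n - m + 1),
            g (k + 1) * hIter h k n * compositionSum g h (n - m - k) (n - k) := by
          rw [Acoeff_succ_succ g h hnv, ← sum_subset (range_subset_range.mpr (by omega)) hterms]
          refine sum_congr rfl fun k hk => ?_
          rw [ih (n - k) (by omega) (by simp at hk; omega), show n - k - m = n - m - k by omega]
      _ = compositionSum g h (n + 1 - (m + 1)) (n + 1) := by
          rw [sum_range_succ', Nat.add_sub_add_right, compositionSum_succ_right, add_comm]
          simp [hg, add_assoc]

lemma mem_permutations_toList_iff {N : ℕ} (μ : Nat.Partition N) (l : List ℕ) :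
    l ∈ μ.parts.toList.permutations ↔ (l : Multiset ℕ) = μ.parts := by
  rw [List.mem_permutations, ← Multiset.coe_eq_coe, Multiset.coe_toList]

lemma sum_partitions_eq_compositionSum (g h : ℕ → ℝ) (N n : ℕ) :
    ∑ μ : Nat.Partition N, GCal g μ.parts.toList * HCal h μ.parts.toList n =
      compositionSum g h N n := by
  have hunion : univ.biUnion (fun μ : Nat.Partition N => μ.parts.toList.permutations.toFinset) =
      compositions N := by
    ext l
    simp only [mem_biUnion, mem_univ, true_and, List.mem_toFinset, mem_permutations_toList_iff,
      mem_compositions]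
    constructor
    · rintro ⟨μ, hμ⟩
      exact ⟨by rw [← Multiset.sum_coe, hμ, μ.parts_sum],
        fun x hx => μ.parts_pos (hμ ▸ Multiset.mem_coe.mpr hx)⟩
    · rintro ⟨hsum, hpos⟩
      exact ⟨⟨l, fun hx => hpos _ hx, hsum⟩, rfl⟩
  have hdisj : ((univ : Finset (Nat.Partition N)) : Set (Nat.Partition N)).PairwiseDisjoint
      fun μ => μ.parts.toList.permutations.toFinset := by
    intro μ _ ν _ hμν
    simp only [Function.onFun, disjoint_left, List.mem_toFinset, mem_permutations_toList_iff]
    exact fun _ hμ hν => hμν (Nat.Partition.ext (hμ.symm.trans hν))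
  calc ∑ μ : Nat.Partition N, GCal g μ.parts.toList * HCal h μ.parts.toList n
      = ∑ μ : Nat.Partition N, ∑ l ∈ μ.parts.toList.permutations.toFinset,
          GCal g l * HFun h l n := by
        refine sum_congr rfl fun μ _ => ?_
        rw [HCal, mul_sum]
        refine sum_congr rfl fun l hl => ?_
        rw [(List.mem_permutations.mp (List.mem_toFinset.mp hl)).GCal_eq]
    _ = ∑ l ∈ compositions N, GCal g l.reverse * Hrev h l.reverse n := by
        rw [← hunion, sum_biUnion hdisj]
        refine sum_congr rfl fun μ _ => sum_congr rfl fun l _ => ?_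
        rw [HFun, (List.reverse_perm l).GCal_eq]
    _ = compositionSum g h N n := sum_compositions_reverse N fun l => GCal g l * Hrev h l n

theorem main_formula_for_coefficients_general (g h : ℕ → ℝ)
    (hg : g 1 = 1) (hnv : ∀ k, 1 ≤ k → h k ≠ 0)
    (n m : ℕ) (hmn : m < n) :
    Acoeff g h n m =
      ∑ μ : Nat.Partition (n - m), GCal g μ.parts.toList * HCal h μ.parts.toList n := by
  rw [sum_partitions_eq_compositionSum, Acoeff_eq_compositionSum g h hg hnv hmn.le]

/-- Main Theorem: `A_{n,m}^{g,h} = Σ_{μ ⊢ n-m} 𝓖(μ) · 𝓗(μ, n)`. -/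
theorem main_formula_for_coefficients (g h : ℕ → ℝ)
    (hg : g 1 = 1) (hh : h 1 = 1) (hnv : ∀ k, 1 ≤ k → h k ≠ 0)
    (n m : ℕ) (hm1 : 1 ≤ m) (hmn : m < n) :
    Acoeff g h n m =
      ∑ μ : Nat.Partition (n - m), GCal g μ.parts.toList * HCal h μ.parts.toList n :=
  main_formula_for_coefficients_general g h hg hnv n m hmn
end

section
/- Let h be the arithmetic function h(n) = n for n ≥ 1 (with h(0) := 0). Then for every composition μ and every integer n ≥ 1, H(μ, n) = (∏_{k=0}^{|μ|+ℓ(μ)−1} (n − k)) · ∏_{k=1}^{ℓ(μ)} (k + Σ_{j=1}^{k} μ_j)^{−1}. -/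
open Finset Polynomial

/-! With `h = id`, `h_m(k) = k (k - 1) ⋯ (k - m + 1)` is the falling factorial `k^{(m)}`,
and `k^{(a)} (k - a)^{(b)} = k^{(a + b)}`. Hence, by induction on `ℓ(μ)`, each summand in the
recursion for `H(ν ++ [a], n)` is `k^{(d)}` times the constant weight of `ν`, where
`d = |ν| + a + ℓ(ν)`, and the discrete antiderivative `Σ_{k<n} k^{(d)} = n^{(d+1)} / (d + 1)`
both raises the falling factorial to the full size and contributes the last factor
`1 / (d + 1)` of the weight. -/

theorem Nat.succ_mul_sum_range_descFactorial (d n : ℕ) :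
    (d + 1) * ∑ k ∈ range n, k.descFactorial d = n.descFactorial (d + 1) := by
  induction n with
  | zero => simp
  | succ n ih =>
    simp only [Nat.descFactorial_eq_factorial_mul_choose, Nat.factorial_succ,
      Nat.choose_succ_succ, sum_range_succ] at ih ⊢
    rw [mul_add, ih]
    ring

theorem Nat.succ_mul_sum_Ico_descFactorial (d n : ℕ) :
    (d + 1) * ∑ k ∈ Ico d n, k.descFactorial d = n.descFactorial (d + 1) := by
  rw [← Nat.succ_mul_sum_range_descFactorial,
    sum_subset fun k hk => mem_range.mpr (mem_Ico.mp hk).2]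
  intro k _ hk
  exact Nat.descFactorial_eq_zero_iff_lt.mpr (by simp_all)

theorem hIter_natCast (a k : ℕ) : hIter (fun m => (m : ℝ)) a k = k.descFactorial a := by
  rw [hIter, Nat.descFactorial_eq_prod_range, Nat.cast_prod]
  refine prod_congr rfl fun j _ => ?_
  by_cases hj : k - j = 0 <;> simp [hExt, hj]

theorem HFun_append_singleton (h : ℕ → ℝ) (ν : List ℕ) (a n : ℕ) :
    HFun h (ν ++ [a]) n =
      if n < ν.sum + a + ν.length + 1 then 0
      else ∑ k ∈ Ico (ν.sum + a + ν.length) n, hIter h a k * HFun h ν (k - a) := by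
  simp only [HFun, List.reverse_append, List.reverse_singleton, List.singleton_append, Hrev,
    List.sum_cons, List.sum_reverse, List.length_cons, List.length_reverse]
  rw [show a + ν.sum + (ν.length + 1) - 1 = ν.sum + a + ν.length by omega,
    show a + ν.sum + (ν.length + 1) = ν.sum + a + ν.length + 1 by omega]

noncomputable def prefixWeight (μ : List ℕ) : ℝ :=
  ∏ k ∈ Icc 1 μ.length, ((k : ℝ) + ((μ.take k).sum : ℝ))⁻¹

theorem prefixWeight_nil : prefixWeight [] = 1 := by
  simp [prefixWeight]

theorem prefixWeight_append_singleton (ν : List ℕ) (a : ℕ) :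
    prefixWeight (ν ++ [a]) =
      prefixWeight ν * ((ν.sum + a + ν.length + 1 : ℕ) : ℝ)⁻¹ := by
  rw [prefixWeight, List.length_append, List.length_singleton,
    prod_Icc_succ_top (by omega), List.take_of_length_le (by simp), prefixWeight]
  congr 1
  · refine prod_congr rfl fun k hk => ?_
    rw [List.take_append_of_le_length (mem_Icc.mp hk).2]
  · rw [List.sum_append, List.sum_singleton]
    push_cast
    ring

theorem HFun_natCast (μ : List ℕ) (n : ℕ) :
    HFun (fun m => (m : ℝ)) μ n = n.descFactorial (μ.sum + μ.length) * prefixWeight μ := by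
  induction μ using List.reverseRecOn generalizing n with
  | nil => simp [HFun, Hrev, prefixWeight_nil]
  | append_singleton ν a ih =>
    have hsize : (ν ++ [a]).sum + (ν ++ [a]).length = ν.sum + a + ν.length + 1 := by
      simp only [List.sum_append, List.sum_singleton, List.length_append, List.length_singleton]
      omega
    rw [HFun_append_singleton, prefixWeight_append_singleton, hsize]
    set d := ν.sum + a + ν.length
    split_ifs with hn
    · rw [Nat.descFactorial_eq_zero_iff_lt.mpr hn, Nat.cast_zero, zero_mul]
    have hsummand : ∀ k ∈ Ico d n,
        hIter (fun m => (m : ℝ)) a k * HFun (fun m => (m : ℝ)) ν (k - a) =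
          k.descFactorial d * prefixWeight ν := by
      intro k _
      rw [hIter_natCast, ih, show ν.sum + ν.length = d - a by omega, ← mul_assoc,
        ← Nat.cast_mul, mul_comm (k.descFactorial a),
        Nat.descFactorial_mul_descFactorial (by omega : a ≤ d)]
    have hsum :
        ∑ k ∈ Ico d n, (k.descFactorial d : ℝ) = n.descFactorial (d + 1) / (d + 1) := by
      rw [eq_div_iff (by positivity)]
      exact_mod_cast (mul_comm _ _).trans (Nat.succ_mul_sum_Ico_descFactorial d n)
    rw [sum_congr rfl hsummand, ← sum_mul, hsum]
    push_cast
    ring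

theorem closed_form_H_h_id_general (μ : List ℕ) (n : ℕ) :
    HFun (fun k => (k : ℝ)) μ n =
      (∏ k ∈ Finset.range (μ.sum + μ.length), ((n : ℝ) - (k : ℝ))) *
        ∏ k ∈ Finset.Icc 1 μ.length, ((k : ℝ) + ((μ.take k).sum : ℝ))⁻¹ := by
  rw [HFun_natCast, prod_range_natCast_sub, ← Nat.descFactorial_eq_prod_range]
  rfl

/-- For `h = id`:
`H(μ, n) = ∏_{k=0}^{|μ|+ℓ(μ)-1}(n-k) · ∏_{k=1}^{ℓ(μ)} (k + Σ_{j=1}^k μ_j)⁻¹`. -/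
theorem closed_form_H_h_id (μ : List ℕ) (hpos : ∀ x ∈ μ, 0 < x) (n : ℕ) (hn : 1 ≤ n) :
    HFun (fun k => (k : ℝ)) μ n =
      (∏ k ∈ Finset.range (μ.sum + μ.length), ((n : ℝ) - (k : ℝ))) *
        ∏ k ∈ Finset.Icc 1 μ.length, ((k : ℝ) + ((μ.take k).sum : ℝ))⁻¹ :=
  closed_form_H_h_id_general μ n
end

section
/- Let g and h be normalized arithmetic functions with g(n) > 0 and h(n) > 0 for all n ≥ 1, and let a_{n,m} denote the coefficient of x^m in P_n^{g,h}(x). If g(2)^2 > g(3), then for all n ≥ 2, a_{n,n−1}^2 > a_{n,n−2} · a_{n,n}. -/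
open Finset Polynomial

/-! The top coefficient `t_n` of `P_n` is `∏_{k ≤ n} h(k)⁻¹`, and the recursion shows that the next
two are `g(2) (h(1) + ⋯ + h(n - 1)) t_n` and `pairSum g h (n - 2) · t_n`. After dividing by `t_n²`
the claim becomes `pairSum g h m < (g(2) S_{m+1})²` with `S_k = h(1) + ⋯ + h(k)`. At `m = 0` this
reads `0 < (g(2) h(1))²`, and each later step raises the left side by
`h(m+2) (g(2)² S_m + g(3) h(m+1))`, which is at most the increase
`g(2)² h(m+2) (2 S_{m+1} + h(m+2))` of the right side because `g(3) < g(2)²`. -/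

noncomputable def hSum (h : ℕ → ℝ) (n : ℕ) : ℝ := ∑ j ∈ range n, h (j + 1)

/-- `g(2)² Σ_{1 ≤ i, i + 1 < j ≤ n + 1} h(i) h(j) + g(3) Σ_{1 ≤ j ≤ n} h(j) h(j + 1)`, written as a
sum over the larger index. -/
noncomputable def pairSum (g h : ℕ → ℝ) (n : ℕ) : ℝ :=
  ∑ j ∈ range n, h (j + 2) * (g 2 ^ 2 * hSum h j + g 3 * h (j + 1))

theorem hSum_succ (h : ℕ → ℝ) (n : ℕ) : hSum h (n + 1) = hSum h n + h (n + 1) :=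
  sum_range_succ _ _

theorem pairSum_succ (g h : ℕ → ℝ) (n : ℕ) :
    pairSum g h (n + 1) = pairSum g h n + h (n + 2) * (g 2 ^ 2 * hSum h n + g 3 * h (n + 1)) :=
  sum_range_succ _ _

namespace Ppoly

variable (g h : ℕ → ℝ)

theorem zero : Ppoly g h 0 = 1 := by
  rw [Ppoly]

theorem succ (n : ℕ) :
    Ppoly g h (n + 1) = C (h (n + 1))⁻¹ * X *
      ∑ k ∈ range (n + 1), C (g (k + 1)) * Ppoly g h (n - k) := by
  rw [Ppoly]

theorem coeff_succ_zero (n : ℕ) : (Ppoly g h (n + 1)).coeff 0 = 0 := by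
  rw [succ, mul_assoc, coeff_C_mul, coeff_X_mul_zero, mul_zero]

theorem coeff_succ_succ (n m : ℕ) :
    (Ppoly g h (n + 1)).coeff (m + 1) =
      (h (n + 1))⁻¹ * ∑ k ∈ range (n + 1), g (k + 1) * (Ppoly g h (n - k)).coeff m := by
  simp only [succ, mul_assoc, coeff_C_mul, coeff_X_mul, finsetSum_coeff]

theorem coeff_eq_zero_of_lt {n m : ℕ} (hnm : n < m) : (Ppoly g h n).coeff m = 0 := by
  induction n using Nat.strong_induction_on generalizing m with
  | _ n ih =>
    obtain ⟨m, rfl⟩ : ∃ m', m = m' + 1 := ⟨m - 1, by omega⟩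
    cases n with
    | zero => rw [zero, coeff_one]; simp
    | succ n =>
      rw [coeff_succ_succ, sum_eq_zero, mul_zero]
      intro k hk
      rw [ih (n - k) (by omega) (by omega), mul_zero]

theorem coeff_add_succ (m d : ℕ) :
    (Ppoly g h (m + d + 1)).coeff (m + 1) =
      (h (m + d + 1))⁻¹ * ∑ k ∈ range (d + 1), g (k + 1) * (Ppoly g h (m + d - k)).coeff m := by
  rw [coeff_succ_succ, show m + d + 1 = (d + 1) + m by omega, sum_range_add,
    sum_eq_zero (s := range m), add_zero]
  intro k hk
  rw [coeff_eq_zero_of_lt g h (by simp at hk; omega), mul_zero]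

variable {g h}

theorem coeff_self_succ (hg1 : g 1 = 1) (n : ℕ) :
    (Ppoly g h (n + 1)).coeff (n + 1) = (h (n + 1))⁻¹ * (Ppoly g h n).coeff n := by
  simpa [hg1] using coeff_add_succ g h n 0

theorem coeff_self_pos (hg1 : g 1 = 1) (hh : ∀ k, 1 ≤ k → 0 < h k) (n : ℕ) :
    0 < (Ppoly g h n).coeff n := by
  induction n with
  | zero => simp [zero]
  | succ n ih => rw [coeff_self_succ hg1]; exact mul_pos (inv_pos.2 (hh _ n.succ_pos)) ih

theorem coeff_self_eq_mul_coeff_succ_self (hg1 : g 1 = 1) (hh : ∀ k, 1 ≤ k → h k ≠ 0) (n : ℕ) :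
    (Ppoly g h n).coeff n = h (n + 1) * (Ppoly g h (n + 1)).coeff (n + 1) := by
  rw [coeff_self_succ hg1, mul_inv_cancel_left₀ (hh _ n.succ_pos)]

theorem coeff_pred (hg1 : g 1 = 1) (hh : ∀ k, 1 ≤ k → h k ≠ 0) (n : ℕ) :
    (Ppoly g h (n + 1)).coeff n = g 2 * hSum h n * (Ppoly g h (n + 1)).coeff (n + 1) := by
  induction n with
  | zero => simp [coeff_succ_zero, hSum]
  | succ n ih =>
    have hrec := coeff_add_succ g h n 1
    norm_num [sum_range_succ] at hrec
    rw [hrec, coeff_self_succ hg1 (n + 1), ih, coeff_self_eq_mul_coeff_succ_self hg1 hh n, hg1,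
      hSum_succ]
    ring

theorem coeff_pred_pred (hg1 : g 1 = 1) (hh : ∀ k, 1 ≤ k → h k ≠ 0) (n : ℕ) :
    (Ppoly g h (n + 2)).coeff n = pairSum g h n * (Ppoly g h (n + 2)).coeff (n + 2) := by
  induction n with
  | zero => simp [coeff_succ_zero, pairSum]
  | succ n ih =>
    have hrec := coeff_add_succ g h n 2
    norm_num [sum_range_succ] at hrec
    rw [hrec, coeff_self_succ hg1 (n + 2), ih, coeff_pred hg1 hh,
      coeff_self_eq_mul_coeff_succ_self hg1 hh n, coeff_self_eq_mul_coeff_succ_self hg1 hh (n + 1),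
      hg1, pairSum_succ]
    ring

end Ppoly

theorem pairSum_lt_sq {g h : ℕ → ℝ} (hg2 : g 2 ≠ 0) (hg3 : g 3 < g 2 ^ 2)
    (hh : ∀ k, 1 ≤ k → 0 < h k) (n : ℕ) : pairSum g h n < (g 2 * hSum h (n + 1)) ^ 2 := by
  have step (j : ℕ) : h (j + 2) * (g 2 ^ 2 * hSum h j + g 3 * h (j + 1)) ≤
      (g 2 * hSum h (j + 2)) ^ 2 - (g 2 * hSum h (j + 1)) ^ 2 := by
    have hS : 0 ≤ hSum h j := sum_nonneg fun i _ ↦ (hh (i + 1) i.succ_pos).le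
    have h1 := hh (j + 1) j.succ_pos
    have h2 := hh (j + 2) (by omega)
    rw [hSum_succ, hSum_succ]
    nlinarith [mul_pos h1 h2, mul_nonneg (mul_nonneg h2.le hS) (sq_nonneg (g 2)),
      mul_nonneg (mul_nonneg h2.le h2.le) (sq_nonneg (g 2))]
  have hbase : 0 < (g 2 * hSum h 1) ^ 2 := by
    rw [hSum, sum_range_one]
    exact sq_pos_of_ne_zero (mul_ne_zero hg2 (hh 1 le_rfl).ne')
  calc pairSum g h n
      ≤ ∑ j ∈ range n, ((g 2 * hSum h (j + 2)) ^ 2 - (g 2 * hSum h (j + 1)) ^ 2) :=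
        sum_le_sum fun j _ ↦ step j
    _ = (g 2 * hSum h (n + 1)) ^ 2 - (g 2 * hSum h 1) ^ 2 :=
        sum_range_sub (fun j ↦ (g 2 * hSum h (j + 1)) ^ 2) n
    _ < (g 2 * hSum h (n + 1)) ^ 2 := sub_lt_self _ hbase

theorem top_log_concavity_general (g h : ℕ → ℝ) (hg1 : g 1 = 1)
    (hgpos : ∀ k, 1 ≤ k → 0 < g k) (hhpos : ∀ k, 1 ≤ k → 0 < h k)
    (hcond : g 2 ^ 2 > g 3) (n : ℕ) (hn : 2 ≤ n) :
    ((Ppoly g h n).coeff (n - 1)) ^ 2 >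
      (Ppoly g h n).coeff (n - 2) * (Ppoly g h n).coeff n := by
  obtain ⟨m, rfl⟩ : ∃ m, n = m + 2 := ⟨n - 2, by omega⟩
  have hh : ∀ k, 1 ≤ k → h k ≠ 0 := fun k hk ↦ (hhpos k hk).ne'
  rw [show m + 2 - 1 = m + 1 by omega, Nat.add_sub_cancel, Ppoly.coeff_pred hg1 hh,
    Ppoly.coeff_pred_pred hg1 hh]
  have htop := Ppoly.coeff_self_pos hg1 hhpos (m + 2)
  have hkey := pairSum_lt_sq (hgpos 2 (by norm_num)).ne' hcond hhpos m
  calc pairSum g h m * _ * _ < (g 2 * hSum h (m + 1)) ^ 2 * _ * _ := by gcongr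
    _ = _ := by ring

/-- If `g(2)² > g(3)` then the top coefficients of `P_n^{g,h}` satisfy
`a_{n,n-1}² > a_{n,n-2} · a_{n,n}` for all `n ≥ 2`. -/
theorem top_log_concavity (g h : ℕ → ℝ) (hg1 : g 1 = 1) (hh1 : h 1 = 1)
    (hgpos : ∀ k, 1 ≤ k → 0 < g k) (hhpos : ∀ k, 1 ≤ k → 0 < h k)
    (hcond : g 2 ^ 2 > g 3) (n : ℕ) (hn : 2 ≤ n) :
    ((Ppoly g h n).coeff (n - 1)) ^ 2 >
      (Ppoly g h n).coeff (n - 2) * (Ppoly g h n).coeff n :=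
  top_log_concavity_general g h hg1 hgpos hhpos hcond n hn
end

section
/- Let h be a normalized non-vanishing arithmetic function and let id be the arithmetic function id(n) = n. Then for every n ≥ 1, the polynomials P_n = P_n^{id,h} satisfy the three-term recurrence (h(n)/h(n+2)) · P_n(x) + (−2·h(n+1)/h(n+2) − x/h(n+2)) · P_{n+1}(x) + P_{n+2}(x) = 0. -/
open Finset Polynomial

/-! With `P = P^{id,h}`, the recursion reads `h(m) P_m = x W_m` for `m ≥ 1`, where
`W_m = Σ_{j<m} (m - j) P_j`. The weights `m - j` are linear in `m`, so the second difference
`W_{m+2} - 2 W_{m+1} + W_m` collapses to the single term `P_{m+1}`; multiplying by `x` gives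
`h(n+2) P_{n+2} - 2 h(n+1) P_{n+1} + h(n) P_n = x P_{n+1}` for `n ≥ 1`. -/

theorem C_mul_Ppoly_succ (g h : ℕ → ℝ) (n : ℕ) (hn : h (n + 1) ≠ 0) :
    C (h (n + 1)) * Ppoly g h (n + 1) =
      X * ∑ k ∈ range (n + 1), C (g (k + 1)) * Ppoly g h (n - k) := by
  rw [Ppoly, ← mul_assoc, ← mul_assoc, ← C_mul, mul_inv_cancel₀ hn, C_1, one_mul]

noncomputable def weightedSum {M : Type*} [AddCommMonoid M] (f : ℕ → M) (m : ℕ) : M :=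
  ∑ j ∈ range m, (m - j) • f j

theorem weightedSum_succ {M : Type*} [AddCommMonoid M] (f : ℕ → M) (m : ℕ) :
    weightedSum f (m + 1) = weightedSum f m + ∑ j ∈ range (m + 1), f j := by
  have hweight : ∀ j ∈ range m, (m + 1 - j) • f j = (m - j) • f j + f j := fun j hj => by
    rw [Nat.succ_sub (mem_range.mp hj).le, succ_nsmul]
  rw [weightedSum, sum_range_succ, sum_congr rfl hweight, sum_add_distrib, Nat.add_sub_cancel_left,
    one_smul, sum_range_succ _ m, weightedSum, add_assoc]

theorem weightedSum_second_diff {M : Type*} [AddCommGroup M] (f : ℕ → M) (m : ℕ) :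
    weightedSum f (m + 2) - 2 • weightedSum f (m + 1) + weightedSum f m = f (m + 1) := by
  rw [weightedSum_succ f (m + 1), weightedSum_succ f m, sum_range_succ _ (m + 1)]
  abel

theorem C_mul_Ppoly_id_succ (h : ℕ → ℝ) (n : ℕ) (hn : h (n + 1) ≠ 0) :
    C (h (n + 1)) * Ppoly (fun k => (k : ℝ)) h (n + 1) =
      X * weightedSum (Ppoly (fun k => (k : ℝ)) h) (n + 1) := by
  rw [C_mul_Ppoly_succ _ _ _ hn, weightedSum, ← sum_range_reflect]
  refine congrArg _ (sum_congr rfl fun k hk => ?_)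
  have hkn : k ≤ n := Nat.lt_succ_iff.mp (mem_range.mp hk)
  rw [Nat.add_sub_cancel, Nat.sub_sub_self hkn, nsmul_eq_mul, ← C_eq_natCast,
    Nat.succ_sub hkn]

theorem C_mul_Ppoly_id_second_diff (h : ℕ → ℝ) (hnv : ∀ k, 1 ≤ k → h k ≠ 0) (n : ℕ)
    (hn : 1 ≤ n) :
    C (h (n + 2)) * Ppoly (fun k => (k : ℝ)) h (n + 2) -
        2 * C (h (n + 1)) * Ppoly (fun k => (k : ℝ)) h (n + 1) +
        C (h n) * Ppoly (fun k => (k : ℝ)) h n =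
      X * Ppoly (fun k => (k : ℝ)) h (n + 1) := by
  obtain ⟨m, rfl⟩ := Nat.exists_eq_add_of_le' hn
  rw [mul_assoc, C_mul_Ppoly_id_succ h (m + 2) (hnv _ (by omega)),
    C_mul_Ppoly_id_succ h (m + 1) (hnv _ (by omega)), C_mul_Ppoly_id_succ h m (hnv _ (by omega))]
  linear_combination X * weightedSum_second_diff (Ppoly (fun k => (k : ℝ)) h) (m + 1)

theorem three_term_recurrence_general (h : ℕ → ℝ)
    (hnv : ∀ k, 1 ≤ k → h k ≠ 0) (n : ℕ) (hn : 1 ≤ n) :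
    Polynomial.C (h n / h (n + 2)) * Ppoly (fun k => (k : ℝ)) h n +
        (Polynomial.C (-2 * h (n + 1) / h (n + 2)) -
            Polynomial.C (h (n + 2))⁻¹ * Polynomial.X) *
          Ppoly (fun k => (k : ℝ)) h (n + 1) +
        Ppoly (fun k => (k : ℝ)) h (n + 2) = 0 := by
  have hinv : C (h (n + 2))⁻¹ * C (h (n + 2)) = 1 := by
    rw [← C_mul, inv_mul_cancel₀ (hnv _ (by omega)), C_1]
  simp only [div_eq_mul_inv, neg_mul, map_mul, map_neg, map_ofNat]
  linear_combination C (h (n + 2))⁻¹ * C_mul_Ppoly_id_second_diff h hnv n hn -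
    Ppoly (fun k => (k : ℝ)) h (n + 2) * hinv

/-- Three-term recurrence for `P_n^{id,h}`:
`(h(n)/h(n+2)) P_n + (-2 h(n+1)/h(n+2) - x/h(n+2)) P_{n+1} + P_{n+2} = 0`. -/
theorem three_term_recurrence (h : ℕ → ℝ) (hh : h 1 = 1)
    (hnv : ∀ k, 1 ≤ k → h k ≠ 0) (n : ℕ) (hn : 1 ≤ n) :
    Polynomial.C (h n / h (n + 2)) * Ppoly (fun k => (k : ℝ)) h n +
        (Polynomial.C (-2 * h (n + 1) / h (n + 2)) -
            Polynomial.C (h (n + 2))⁻¹ * Polynomial.X) *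
          Ppoly (fun k => (k : ℝ)) h (n + 1) +
        Ppoly (fun k => (k : ℝ)) h (n + 2) = 0 :=
  three_term_recurrence_general h hnv n hn
end
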